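/- For every n ∈ ℕ, the formula ⊠ⁿ Z distinguishes L(ℌₙ) from L(ℌₙ₊₁): ⊠ⁿ Z is valid on the frame ℌₙ but not valid on ℌₙ₊₁; moreover, if k > m then L(ℌₖ) ⊆ L(ℌₘ). Consequently L(ℌₖ) ≠ L(ℌₘ) whenever k ≠ m. -/
import Mathlib


namespace FOML

/-- First-order modal formulas over a signature assigning to each arity `n` a type
`Pred n` of `n`-ary predicate letters; individual variables are indexed by `ℕ`.
(0-ary predicate letters are proposition letters.) -/
inductive Fml (Pred : ℕ → Type) : Type
  | atom : {n : ℕ} → Pred n → (Fin n → ℕ) → Fml Pred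
  | bot  : Fml Pred
  | imp  : Fml Pred → Fml Pred → Fml Pred
  | box  : Fml Pred → Fml Pred
  | all  : ℕ → Fml Pred → Fml Pred

namespace Fml

variable {Pred : ℕ → Type}

def neg (φ : Fml Pred) : Fml Pred := imp φ bot
def top : Fml Pred := neg bot
def and (φ ψ : Fml Pred) : Fml Pred := neg (imp φ (neg ψ))
def or (φ ψ : Fml Pred) : Fml Pred := imp (neg φ) ψ
def iff (φ ψ : Fml Pred) : Fml Pred := and (imp φ ψ) (imp ψ φ)
def dia (φ : Fml Pred) : Fml Pred := neg (box (neg φ))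
def ex (x : ℕ) (φ : Fml Pred) : Fml Pred := neg (all x (neg φ))

def bigAnd : List (Fml Pred) → Fml Pred
  | [] => top
  | φ :: l => and φ (bigAnd l)

def bigOr : List (Fml Pred) → Fml Pred
  | [] => bot
  | φ :: l => or φ (bigOr l)

/-- Iterated box: `□⁰φ = φ`, `□ⁿ⁺¹φ = □□ⁿφ`. -/
def boxN : ℕ → Fml Pred → Fml Pred
  | 0, φ => φ
  | n + 1, φ => box (boxN n φ)

/-- Replace every occurrence of `□` by `□⁺`, where `□⁺ψ = ψ ∧ □ψ`
(equivalently, every `◇` by its dual `◇⁺ψ = ◇ψ ∨ ψ`). -/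
def plus : Fml Pred → Fml Pred
  | atom P a => atom P a
  | bot => bot
  | imp φ ψ => imp (plus φ) (plus ψ)
  | box φ => and (plus φ) (box (plus φ))
  | all x φ => all x (plus φ)

end Fml

/-- A Kripke model with expanding domains based on the frame `⟨W, R⟩`:
a domain function `D` into nonempty subsets of the domain `Dom`, expanding along `R`,
and an interpretation `I` of predicate letters at each world, with
`I(w,P) ⊆ D(w)ⁿ` for `n`-ary `P`. -/
structure KModel (W : Type*) (R : W → W → Prop) (Pred : ℕ → Type) where
  Dom : Type
  D : W → Set Dom
  D_ne : ∀ w, (D w).Nonempty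
  D_mono : ∀ ⦃w v : W⦄, R w v → D w ⊆ D v
  I : W → (n : ℕ) → Pred n → (Fin n → Dom) → Prop
  I_dom : ∀ (w : W) (n : ℕ) (P : Pred n) (as : Fin n → Dom), I w n P as → ∀ i, as i ∈ D w

variable {W : Type*} {R : W → W → Prop} {Pred : ℕ → Type}

/-- Truth of a formula at a world of a Kripke model under an assignment. -/
def truth (M : KModel W R Pred) : Fml Pred → W → (ℕ → M.Dom) → Prop
  | .atom (n := n) P args, w, g => M.I w n P (fun i => g (args i))
  | .bot, _, _ => False
  | .imp φ ψ, w, g => truth M φ w g → truth M ψ w g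
  | .box φ, w, g => ∀ v : W, R w v → truth M φ v g
  | .all x φ, w, g => ∀ d ∈ M.D w, truth M φ w (Function.update g x d)

/-- A formula is true at a world `w` if it is true under every assignment
taking values in the domain of `w`. -/
def trueAt (M : KModel W R Pred) (w : W) (φ : Fml Pred) : Prop :=
  ∀ g : ℕ → M.Dom, (∀ x, g x ∈ M.D w) → truth M φ w g

/-- `φ ∈ L(W,R)`: validity on the frame `⟨W,R⟩` (truth in every model with
expanding domains based on it, at every world). -/
def ValidOn (R : W → W → Prop) (φ : Fml Pred) : Prop :=
  ∀ (M : KModel W R Pred) (w : W), trueAt M w φ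

/-- The model has (globally) constant domains. -/
def ConstDom (M : KModel W R Pred) : Prop := ∀ w v : W, M.D w = M.D v

/-- `φ ∈ L_c(W,R)`: truth in every model with constant domains based on `⟨W,R⟩`. -/
def ValidOnC (R : W → W → Prop) (φ : Fml Pred) : Prop :=
  ∀ (M : KModel W R Pred), ConstDom M → ∀ w : W, trueAt M w φ

/-- A finite set `T = {t₀, …, t_s}` of tile types (represented as `Fin (s+1)`, with
`t₀ = 0`), each with four edge colours. -/
structure TileSet where
  s : ℕ
  left : Fin (s + 1) → ℕ
  right : Fin (s + 1) → ℕ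
  up : Fin (s + 1) → ℕ
  down : Fin (s + 1) → ℕ

namespace TileSet

/-- (T1): colours match horizontally. -/
def T1 (ts : TileSet) (f : ℕ → ℕ → Fin (ts.s + 1)) : Prop :=
  ∀ n m : ℕ, ts.right (f n m) = ts.left (f (n + 1) m)

/-- (T2): colours match vertically. -/
def T2 (ts : TileSet) (f : ℕ → ℕ → Fin (ts.s + 1)) : Prop :=
  ∀ n m : ℕ, ts.up (f n m) = ts.down (f n (m + 1))

/-- (T3): the tile type `t₀` occurs infinitely often in the leftmost column. -/
def T3 (ts : TileSet) (f : ℕ → ℕ → Fin (ts.s + 1)) : Prop :=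
  {m : ℕ | f 0 m = 0}.Infinite

end TileSet

/-- The predicate letters used in the encoding: a binary letter `◁`; monadic letters
`M`, `P₀, …, P_{s+2}` and `P`; proposition letters `p` and `q`. -/
inductive Letter (s : ℕ) : ℕ → Type
  | lt : Letter s 2
  | M : Letter s 1
  | P : Fin (s + 3) → Letter s 1
  | Pm : Letter s 1
  | p : Letter s 0
  | q : Letter s 0

namespace Enc

/-- Formulas in the language of the encoding. -/
abbrev F (ts : TileSet) := Fml (Letter ts.s)

/-- The list of all tile types. -/
def tiles (ts : TileSet) : List (Fin (ts.s + 1)) := List.finRange (ts.s + 1)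

/-- Tile indices regarded as indices of the letters `P₀, …, P_{s+2}`. -/
def tl (ts : TileSet) (t : Fin (ts.s + 1)) : Fin (ts.s + 3) := ⟨t.1, by omega⟩

def pp (ts : TileSet) : F ts := .atom Letter.p Fin.elim0
def qq (ts : TileSet) : F ts := .atom Letter.q Fin.elim0
def Mx (ts : TileSet) (v : ℕ) : F ts := .atom Letter.M (fun _ => v)
def Px (ts : TileSet) (j : Fin (ts.s + 3)) (v : ℕ) : F ts := .atom (Letter.P j) (fun _ => v)
def PP (ts : TileSet) (v : ℕ) : F ts := .atom Letter.Pm (fun _ => v)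
def ltA (ts : TileSet) (v w : ℕ) : F ts := .atom Letter.lt ![v, w]

/-- `⟐φ = ◇(π ∧ ◇(¬π ∧ φ))`, for a "marker" formula `π` (the paper uses `π = p`,
and `π = ∀x P(x)` for the operator `⊡`). -/
def pdia (ts : TileSet) (π φ : F ts) : F ts := .dia (.and π (.dia (.and (.neg π) φ)))

/-- Iterated `⟐`. -/
def pdiaN (ts : TileSet) (π : F ts) : ℕ → F ts → F ts
  | 0, φ => φ
  | n + 1, φ => pdia ts π (pdiaN ts π n φ)

/-- `U(x) = ⋀_{t ∈ T} ¬P_t(x)`, with the tile letters given by `Pf`. -/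
def Ug (ts : TileSet) (Pf : Fin (ts.s + 1) → ℕ → F ts) (v : ℕ) : F ts :=
  .bigAnd ((tiles ts).map (fun t => .neg (Pf t v)))

/- The conjuncts of the formula `A`, parametrised by the formulas standing for
`x ◁ y` (`rel`), `M(x)` (`Mf`), `P_t(x)` (`Pf`) and `p` (`pf`); the individual
variables `x`, `y` are `0`, `1`. -/

/-- `A₀ = ∃x □U(x)` -/
def A0g (ts : TileSet) (Pf : Fin (ts.s + 1) → ℕ → F ts) : F ts :=
  .ex 0 (.box (Ug ts Pf 0))

/-- `A₁ = ∃x(¬U(x) ∧ M(x))` -/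
def A1g (ts : TileSet) (Mf : ℕ → F ts) (Pf : Fin (ts.s + 1) → ℕ → F ts) : F ts :=
  .ex 0 (.and (.neg (Ug ts Pf 0)) (Mf 0))

/-- `A₂ = ∀x∃y (x ◁ y)` -/
def A2g (ts : TileSet) (rel : ℕ → ℕ → F ts) : F ts := .all 0 (.ex 1 (rel 0 1))

/-- `A₃ = ∀x∀y(x◁y → □(∃x M(x) → x◁y))` -/
def A3g (ts : TileSet) (rel : ℕ → ℕ → F ts) (Mf : ℕ → F ts) : F ts :=
  .all 0 (.all 1 (.imp (rel 0 1) (.box (.imp (.ex 0 (Mf 0)) (rel 0 1)))))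

/-- `A₄ = ∀x∀y(x◁y → □(M(x) ↔ ¬p ∧ ⟐M(y) ∧ ¬⟐²M(y)))` -/
def A4g (ts : TileSet) (rel : ℕ → ℕ → F ts) (Mf : ℕ → F ts) (pf : F ts) : F ts :=
  .all 0 (.all 1 (.imp (rel 0 1)
    (.box (.iff (Mf 0)
      (.and (.neg pf) (.and (pdia ts pf (Mf 1)) (.neg (pdiaN ts pf 2 (Mf 1)))))))))

/-- `A₅ = ∀x∀y □⋀_{t∈T}(M(x) ∧ P_t(y) → □(M(x) → P_t(y)))` -/
def A5g (ts : TileSet) (Mf : ℕ → F ts) (Pf : Fin (ts.s + 1) → ℕ → F ts) : F ts :=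
  .all 0 (.all 1 (.box (.bigAnd ((tiles ts).map fun t =>
    .imp (.and (Mf 0) (Pf t 1)) (.box (.imp (Mf 0) (Pf t 1)))))))

/-- `A₆ = ∀x □⋀_{t∈T}(P_t(x) → ⋀_{t'≠t} ¬P_{t'}(x))` -/
def A6g (ts : TileSet) (Pf : Fin (ts.s + 1) → ℕ → F ts) : F ts :=
  .all 0 (.box (.bigAnd ((tiles ts).map fun t =>
    .imp (Pf t 0)
      (.bigAnd (((tiles ts).filter (fun t' => decide (t' ≠ t))).map fun t' => .neg (Pf t' 0))))))

/-- `A₇ = ∀x∀y □⋀_{t∈T}(x◁y ∧ P_t(x) → ⋁_{right(t)=left(t')} P_{t'}(y))` -/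
def A7g (ts : TileSet) (rel : ℕ → ℕ → F ts) (Pf : Fin (ts.s + 1) → ℕ → F ts) : F ts :=
  .all 0 (.all 1 (.box (.bigAnd ((tiles ts).map fun t =>
    .imp (.and (rel 0 1) (Pf t 0))
      (.bigOr (((tiles ts).filter fun t' => decide (ts.right t = ts.left t')).map
        fun t' => Pf t' 1))))))

/-- `A₈ = ∀x∀y □⋀_{t∈T}(M(x) ∧ P_t(y) → □(∃y(x◁y ∧ M(y)) → ⋁_{up(t)=down(t')} P_{t'}(y)))` -/
def A8g (ts : TileSet) (rel : ℕ → ℕ → F ts) (Mf : ℕ → F ts)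
    (Pf : Fin (ts.s + 1) → ℕ → F ts) : F ts :=
  .all 0 (.all 1 (.box (.bigAnd ((tiles ts).map fun t =>
    .imp (.and (Mf 0) (Pf t 1))
      (.box (.imp (.ex 1 (.and (rel 0 1) (Mf 1)))
        (.bigOr (((tiles ts).filter fun t' => decide (ts.up t = ts.down t')).map
          fun t' => Pf t' 1))))))))

/-- `A₉ = ∀x(M(x) → □⟐P_{t₀}(x))` -/
def A9g (ts : TileSet) (Mf : ℕ → F ts) (Pf : Fin (ts.s + 1) → ℕ → F ts) (pf : F ts) : F ts :=
  .all 0 (.imp (Mf 0) (.box (pdia ts pf (Pf 0 0))))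

/-- The list `[A₀, …, A₈]` (all conjuncts of `A` except `A₉`), parametrised. -/
def AlistB (ts : TileSet) (rel : ℕ → ℕ → F ts) (Mf : ℕ → F ts)
    (Pf : Fin (ts.s + 1) → ℕ → F ts) (pf : F ts) : List (F ts) :=
  [A0g ts Pf, A1g ts Mf Pf, A2g ts rel, A3g ts rel Mf, A4g ts rel Mf pf,
   A5g ts Mf Pf, A6g ts Pf, A7g ts rel Pf, A8g ts rel Mf Pf]

/-- The tile letters `P_{t₀}, …, P_{t_s}`, i.e. `P₀, …, P_s`. -/
def PfA (ts : TileSet) : Fin (ts.s + 1) → ℕ → F ts := fun t v => Px ts (tl ts t) v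

/-- The formula `A`: the conjunction of `A₀` through `A₉`. -/
def A (ts : TileSet) : F ts :=
  .bigAnd (AlistB ts (ltA ts) (Mx ts) (PfA ts) (pp ts) ++
    [A9g ts (Mx ts) (PfA ts) (pp ts)])

/-- The formula `B`: the conjunction of `A₀` through `A₈`. -/
def B (ts : TileSet) : F ts := .bigAnd (AlistB ts (ltA ts) (Mx ts) (PfA ts) (pp ts))

/-- `A₉• = ∀x(M(x) → □(∃y M(y) → ⟐(∃y M(y) → P_{t₀}(x))))` -/
def A9bul (ts : TileSet) : F ts :=
  .all 0 (.imp (Mx ts 0) (.box (.imp (.ex 1 (Mx ts 1))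
    (pdia ts (pp ts) (.imp (.ex 1 (Mx ts 1)) (PfA ts 0 0))))))

/-- The formula `A•`: the conjunction of `A₀` through `A₈` together with `A₉•`. -/
def Abullet (ts : TileSet) : F ts :=
  .bigAnd (AlistB ts (ltA ts) (Mx ts) (PfA ts) (pp ts) ++ [A9bul ts])

/-- `⟐(P_{s+1}(x) ∧ P_{s+2}(y))`, the formula substituted for `x ◁ y` in `A′`. -/
def relA' (ts : TileSet) (v w : ℕ) : F ts :=
  pdia ts (pp ts) (.and (Px ts ⟨ts.s + 1, by omega⟩ v) (Px ts ⟨ts.s + 2, by omega⟩ w))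

/-- The formula `A′`: the result of substituting `⟐(P_{s+1}(x) ∧ P_{s+2}(y))` for
`x ◁ y` throughout `A`. -/
def A' (ts : TileSet) : F ts :=
  .bigAnd (AlistB ts (relA' ts) (Mx ts) (PfA ts) (pp ts) ++
    [A9g ts (Mx ts) (PfA ts) (pp ts)])

/-- `∀x P(x)`, the marker formula of the operator `⊡`. -/
def pfS (ts : TileSet) : F ts := .all 0 (PP ts 0)

/-- `⊡φ = ◇(∀x P(x) ∧ ◇(¬∀x P(x) ∧ φ))`. -/
def bdia (ts : TileSet) (φ : F ts) : F ts := pdia ts (pfS ts) φ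

/-- Iterated `⊡`. -/
def bdiaN (ts : TileSet) (n : ℕ) (φ : F ts) : F ts := pdiaN ts (pfS ts) n φ

/-- `q ∧ P(v)`, the replacement of `M(v)`. -/
def MS (ts : TileSet) (v : ℕ) : F ts := .and (qq ts) (PP ts v)

/-- `βₙ(x) = ∃y(⊡^{s+4}(q ∧ P(y)) ∧ ¬⊡^{s+5}(q ∧ P(y)) ∧
⊡(⊡^{n+1}(q ∧ P(y)) ∧ ¬⊡^{n+2}(q ∧ P(y)) ∧ P(x)))`, and `βₙ(y)` with `x`, `y` exchanged
(the variables `x`, `y` are `0`, `1`, so the bound variable is `1 - v`). -/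
def beta (ts : TileSet) (n : Fin (ts.s + 3)) (v : ℕ) : F ts :=
  .ex (1 - v) (.and (bdiaN ts (ts.s + 4) (MS ts (1 - v)))
    (.and (.neg (bdiaN ts (ts.s + 5) (MS ts (1 - v))))
      (bdia ts (.and (bdiaN ts ((n : ℕ) + 1) (MS ts (1 - v)))
        (.and (.neg (bdiaN ts ((n : ℕ) + 2) (MS ts (1 - v)))) (PP ts v))))))

/-- The replacement `βₜ` of the tile letters. -/
def PfS (ts : TileSet) : Fin (ts.s + 1) → ℕ → F ts := fun t v => beta ts (tl ts t) v

/-- `⊡(β_{s+1}(x) ∧ β_{s+2}(y))`, the replacement of `x ◁ y` in `A*`. -/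
def relS (ts : TileSet) (v w : ℕ) : F ts :=
  bdia ts (.and (beta ts ⟨ts.s + 1, by omega⟩ v) (beta ts ⟨ts.s + 2, by omega⟩ w))

/-- `A₄* = ∀x∀y(⊡(β_{s+1}(x) ∧ β_{s+2}(y)) →
□(q ∧ P(x) ↔ ¬∀x P(x) ∧ ⊡^{s+4}(q ∧ P(y)) ∧ ¬⊡^{s+5}(q ∧ P(y))))` -/
def A4star (ts : TileSet) : F ts :=
  .all 0 (.all 1 (.imp (relS ts 0 1)
    (.box (.iff (MS ts 0)
      (.and (.neg (pfS ts))
        (.and (bdiaN ts (ts.s + 4) (MS ts 1)) (.neg (bdiaN ts (ts.s + 5) (MS ts 1)))))))))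

/-- `A₉* = ∀x(q ∧ P(x) → □⊡β₀(x))` -/
def A9star (ts : TileSet) : F ts :=
  .all 0 (.imp (MS ts 0) (.box (bdia ts (beta ts ⟨0, by omega⟩ 0))))

/-- The list `[A₀*, …, A₈*]`. -/
def BstarList (ts : TileSet) : List (F ts) :=
  [A0g ts (PfS ts), A1g ts (MS ts) (PfS ts), A2g ts (relS ts), A3g ts (relS ts) (MS ts),
   A4star ts, A5g ts (MS ts) (PfS ts), A6g ts (PfS ts), A7g ts (relS ts) (PfS ts),
   A8g ts (relS ts) (MS ts) (PfS ts)]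

/-- The formula `A*`: the conjunction of `A₀*` through `A₉*`. -/
def Astar (ts : TileSet) : F ts := .bigAnd (BstarList ts ++ [A9star ts])

/-- The formula `B*`: the conjunction of `A₀*` through `A₈*`. -/
def Bstar (ts : TileSet) : F ts := .bigAnd (BstarList ts)

/-- The formula `A⁺`: the result of replacing every `□` in `A*` by `□⁺`. -/
def Aplus (ts : TileSet) : F ts := (Astar ts).plus

/-- The formula `B⁺`: the result of replacing every `□` in `B*` by `□⁺`. -/
def Bplus (ts : TileSet) : F ts := (Bstar ts).plus

end Enc

end FOML
namespace FOML

/-- A signature with just two proposition letters `p` and `q`. -/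
inductive PL : ℕ → Type
  | p : PL 0
  | q : PL 0

namespace PL

def pf : Fml PL := .atom PL.p Fin.elim0
def qf : Fml PL := .atom PL.q Fin.elim0

/-- `ref = □p → p` -/
def refF : Fml PL := .imp (.box pf) pf

/-- `Z = □(□p → p) → (◇□p → □p)` -/
def ZF : Fml PL := .imp (.box (.imp (.box pf) pf)) (.imp (.dia (.box pf)) (.box pf))

/-- `⊠φ = (q ∧ □(¬q → φ)) ∨ (¬q ∧ □(q → φ))` -/
def XBox (φ : Fml PL) : Fml PL :=
  .or (.and qf (.box (.imp (.neg qf) φ))) (.and (.neg qf) (.box (.imp qf φ)))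

/-- Iterated `⊠`. -/
def XBoxN : ℕ → Fml PL → Fml PL
  | 0, φ => φ
  | n + 1, φ => XBox (XBoxN n φ)

end PL

/-- The frame `𝔊ₙ`: the irreflexive chain `0, …, n-1` followed by the infinite
reflexive chain `n, n+1, …`. -/
def G (n : ℕ) : ℕ → ℕ → Prop := fun i j => i < j ∨ (i = j ∧ n ≤ i)

/-- The frame `ℌₙ`: the reflexive chain `0, …, n-1` followed by the infinite
irreflexive chain `n, n+1, …`. -/
def H (n : ℕ) : ℕ → ℕ → Prop := fun i j => i < j ∨ (i = j ∧ i < n)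

end FOML
namespace FOML
open PL
section Aux

open Classical

variable {W : Type*} {R : W → W → Prop} {Pred : ℕ → Type}

lemma truth_and (M : KModel W R Pred) (φ ψ : Fml Pred) (w : W) (g : ℕ → M.Dom) :
    truth M (Fml.and φ ψ) w g ↔ truth M φ w g ∧ truth M ψ w g := by
  show ((truth M φ w g → (truth M ψ w g → False)) → False) ↔ _
  tauto

lemma truth_or (M : KModel W R Pred) (φ ψ : Fml Pred) (w : W) (g : ℕ → M.Dom) :
    truth M (Fml.or φ ψ) w g ↔ truth M φ w g ∨ truth M ψ w g := by
  show (((truth M φ w g → False) → truth M ψ w g)) ↔ _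
  tauto

lemma truth_dia (M : KModel W R Pred) (φ : Fml Pred) (w : W) (g : ℕ → M.Dom) :
    truth M (Fml.dia φ) w g ↔ ∃ v, R w v ∧ truth M φ v g := by
  show ((∀ v, R w v → (truth M φ v g → False)) → False) ↔ _
  constructor
  · intro h
    by_contra hc
    push_neg at hc
    exact h fun v hv hf => hc v hv hf
  · rintro ⟨v, hv, hf⟩ h
    exact h v hv hf

/-- In a model on `ℌₘ`, domains are monotone along `≤`. -/
lemma D_mono_le {m : ℕ} (M : KModel ℕ (H m) Pred) {a b : ℕ} (h : a ≤ b) :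
    M.D a ⊆ M.D b := by
  induction b, h using Nat.le_induction with
  | base => exact subset_rfl
  | succ b hb ih => exact ih.trans (M.D_mono (Or.inl (Nat.lt_succ_self b)))

end Aux

namespace PL

/-- `Z` is true at every world `w ≥ n` of any model on `ℌₙ`. -/
lemma ZF_true {n : ℕ} (M : KModel ℕ (H n) PL) (w : ℕ) (hw : n ≤ w) (g : ℕ → M.Dom) :
    truth M ZF w g := by
  intro h1 h2
  rw [truth_dia] at h2
  obtain ⟨u, hu, hup⟩ := h2
  have huw : w < u := by
    rcases hu with h | h
    · exact h
    · omega
  have key : ∀ d v, w < v → u ≤ v + d → truth M pf v g := by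
    intro d
    induction d with
    | zero =>
      intro v hv hle
      refine h1 v (Or.inl hv) ?_
      intro t ht
      rcases ht with h | h
      · exact hup t (Or.inl (by omega))
      · exact ((by omega : False)).elim
    | succ d ih =>
      intro v hv hle
      by_cases hc : u ≤ v + d
      · exact ih v hv hc
      · refine h1 v (Or.inl hv) ?_
        intro t ht
        have htv : v < t := by rcases ht with h | h <;> omega
        exact ih t (by omega) (by omega)
  intro v hv
  have hv' : w < v := by rcases hv with h | h <;> omega
  exact key (u - v) v hv' (by omega)

lemma XBoxN_true {n : ℕ} (M : KModel ℕ (H n) PL) :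
    ∀ (j w : ℕ) (g : ℕ → M.Dom), (∀ v, w + j ≤ v → truth M ZF v g) →
      truth M (XBoxN j ZF) w g := by
  intro j
  induction j with
  | zero =>
    intro w g h
    exact h w (by omega)
  | succ j ih =>
    intro w g h
    show truth M (XBox (XBoxN j ZF)) w g
    rw [XBox, truth_or, truth_and, truth_and]
    by_cases hq : truth M qf w g
    · left
      refine ⟨hq, ?_⟩
      intro v hv hnq
      have hvw : w < v := by
        rcases hv with h' | h'
        · exact h'
        · exact absurd (h'.1 ▸ hq) hnq
      exact ih v g fun t ht => h t (by omega)
    · right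
      refine ⟨hq, ?_⟩
      intro v hv hqv
      have hvw : w < v := by
        rcases hv with h' | h'
        · exact h'
        · exact absurd (h'.1 ▸ hqv) hq
      exact ih v g fun t ht => h t (by omega)

/-- The countermodel on `ℌₙ₊₁`. -/
def cm (n : ℕ) : KModel ℕ (H (n + 1)) PL where
  Dom := Unit
  D := fun _ => Set.univ
  D_ne := fun _ => ⟨(), trivial⟩
  D_mono := fun _ _ _ => subset_rfl
  I := fun w _ P _ => match P with | .p => w ≠ n | .q => Even w
  I_dom := fun _ _ _ _ _ _ => trivial

lemma cm_pf {n v : ℕ} (g : ℕ → (cm n).Dom) : truth (cm n) pf v g ↔ v ≠ n := Iff.rfl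

lemma cm_qf {n v : ℕ} (g : ℕ → (cm n).Dom) : truth (cm n) qf v g ↔ Even v := Iff.rfl

lemma cm_Z_false {n : ℕ} (g : ℕ → (cm n).Dom) : ¬ truth (cm n) ZF n g := by
  intro hz
  have h1 : truth (cm n) (.box (.imp (.box pf) pf)) n g := by
    intro v hv hbp
    by_cases hvn : v = n
    · subst hvn
      exact (((hbp v (Or.inr ⟨rfl, by omega⟩)) : v ≠ v) rfl).elim
    · exact (cm_pf g).mpr hvn
  have h2 : truth (cm n) (.dia (.box pf)) n g := by
    rw [truth_dia]
    refine ⟨n + 1, Or.inl (by omega), ?_⟩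
    intro t ht
    have : n + 1 < t := by rcases ht with h | h <;> omega
    exact (cm_pf g).mpr (by omega)
  have h3 : truth (cm n) (.box pf) n g := hz h1 h2
  exact ((h3 n (Or.inr ⟨rfl, by omega⟩) : n ≠ n)) rfl

lemma cm_chain {n : ℕ} (g : ℕ → (cm n).Dom) :
    ∀ j, j ≤ n → ¬ truth (cm n) (XBoxN j ZF) (n - j) g := by
  intro j
  induction j with
  | zero => intro _; exact cm_Z_false g
  | succ j ih =>
    intro hj h
    have hwv : n - (j + 1) < n - j := by omega
    rw [show XBoxN (j + 1) ZF = XBox (XBoxN j ZF) from rfl, XBox, truth_or,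
      truth_and, truth_and] at h
    have hstep : truth (cm n) (XBoxN j ZF) (n - j) g := by
      rcases h with ⟨hq, hbox⟩ | ⟨hnq, hbox⟩
      · refine hbox (n - j) (Or.inl hwv) ?_
        intro hqv
        have h1 : Even (n - (j + 1)) := (cm_qf g).mp hq
        have h2 : Even (n - j) := (cm_qf g).mp hqv
        have : n - j = (n - (j + 1)) + 1 := by omega
        rw [this, Nat.even_add_one] at h2
        exact h2 h1
      · refine hbox (n - j) (Or.inl hwv) ?_
        rw [cm_qf]
        have h1 : ¬ Even (n - (j + 1)) := fun h' => hnq ((cm_qf g).mpr h')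
        have : n - j = (n - (j + 1)) + 1 := by omega
        rw [this, Nat.even_add_one]
        exact h1
    exact ih (by omega) hstep

end PL

section Transfer

/-- The collapsing map from `ℌₖ` onto `ℌₘ` (for `k > m`). -/
def fkm (k m i : ℕ) : ℕ := if i < m then i else if i < k then m - 1 else i - k + m

lemma fkm_forth {k m i j : ℕ} (hkm : m < k) (hG : m = 0 → k ≤ i) (h : H k i j) :
    H m (fkm k m i) (fkm k m j) := by
  unfold fkm H at *
  split_ifs <;> omega

lemma fkm_back {k m i : ℕ} (hkm : m < k) (hG : m = 0 → k ≤ i) {v : ℕ}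
    (h : H m (fkm k m i) v) : ∃ j, H k i j ∧ fkm k m j = v := by
  refine ⟨if v < m then (if v = fkm k m i then i else v) else v - m + k, ?_, ?_⟩ <;>
    · unfold fkm H at *
      split_ifs at * <;> omega

lemma fkm_mono {k m i j : ℕ} (hkm : m < k) (h : H k i j) :
    fkm k m i ≤ fkm k m j := by
  unfold fkm H at *
  split_ifs <;> omega

lemma fkm_surj {k m : ℕ} (hkm : m < k) (w : ℕ) :
    ∃ i, (m = 0 → k ≤ i) ∧ fkm k m i = w := by
  refine ⟨if w < m then w else w - m + k, ?_⟩
  unfold fkm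
  split_ifs <;> omega

lemma fkm_closed {k m i j : ℕ} (hG : m = 0 → k ≤ i) (h : H k i j) :
    m = 0 → k ≤ j := by
  unfold H at h
  omega

lemma transfer {k m : ℕ} (hkm : m < k) (φ : Fml PL) (hv : ValidOn (H k) φ) :
    ValidOn (H m) φ := by
  intro M2 w g0 hg0
  obtain ⟨i0, hG0, hf0⟩ := fkm_surj (m := m) hkm w
  let M1 : KModel ℕ (H k) PL :=
    { Dom := M2.Dom
      D := fun i => M2.D (fkm k m i)
      D_ne := fun i => M2.D_ne _
      D_mono := fun i j hij => D_mono_le M2 (fkm_mono hkm hij)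
      I := fun i n P as => M2.I (fkm k m i) n P as
      I_dom := fun i n P as h => M2.I_dom _ n P as h }
  have tl : ∀ (ψ : Fml PL) (i : ℕ) (g : ℕ → M2.Dom), (m = 0 → k ≤ i) →
      (truth M1 ψ i g ↔ truth M2 ψ (fkm k m i) g) := by
    intro ψ
    induction ψ with
    | atom P a => intro i g hGi; exact Iff.rfl
    | bot => intro i g hGi; exact Iff.rfl
    | imp φ' ψ' ihφ ihψ =>
      intro i g hGi
      exact imp_congr (ihφ i g hGi) (ihψ i g hGi)
    | box φ' ih =>
      intro i g hGi
      constructor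
      · intro h v hv
        obtain ⟨j, hij, hfj⟩ := fkm_back hkm hGi hv
        have := (ih j g (fkm_closed hGi hij)).mp (h j hij)
        rwa [hfj] at this
      · intro h j hij
        exact (ih j g (fkm_closed hGi hij)).mpr (h _ (fkm_forth hkm hGi hij))
    | all x φ' ih =>
      intro i g hGi
      constructor
      · intro h d hd
        exact (ih i _ hGi).mp (h d hd)
      · intro h d hd
        exact (ih i _ hGi).mpr (h d hd)
  have h1 : truth M1 φ i0 g0 := by
    refine hv M1 i0 g0 ?_
    intro x
    show g0 x ∈ M2.D (fkm k m i0)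
    rw [hf0]
    exact hg0 x
  have h2 := (tl φ i0 g0 hG0).mp h1
  rwa [hf0] at h2

lemma transfer_le {k m : ℕ} (hkm : m ≤ k) (φ : Fml PL) (hv : ValidOn (H k) φ) :
    ValidOn (H m) φ := by
  rcases eq_or_lt_of_le hkm with h | h
  · exact h ▸ hv
  · exact transfer h φ hv

end Transfer


/-- `⊠ⁿ Z` is valid on `ℌₙ` but not valid on `ℌₙ₊₁`; if `k > m` then
`L(ℌₖ) ⊆ L(ℌₘ)`; consequently `L(ℌₖ) ≠ L(ℌₘ)` whenever `k ≠ m`. -/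
theorem statement8 :
    (∀ n : ℕ, ValidOn (H n) (XBoxN n ZF) ∧ ¬ ValidOn (H (n + 1)) (XBoxN n ZF)) ∧
    (∀ k m : ℕ, k > m → ∀ φ : Fml PL, ValidOn (H k) φ → ValidOn (H m) φ) ∧
    (∀ k m : ℕ, k ≠ m →
      {φ : Fml PL | ValidOn (H k) φ} ≠ {φ : Fml PL | ValidOn (H m) φ}) := by
  have part1 : ∀ n : ℕ, ValidOn (H n) (XBoxN n ZF) ∧ ¬ ValidOn (H (n + 1)) (XBoxN n ZF) := by
    intro n
    constructor
    · intro M w g hg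
      exact XBoxN_true M n w g fun v hv => ZF_true M v (by omega) g
    · intro hval
      have h := hval (cm n) 0 (fun _ => ()) (fun _ => trivial)
      have hc := cm_chain (n := n) (fun _ => ()) n le_rfl
      rw [Nat.sub_self] at hc
      exact hc h
  have main : ∀ k m : ℕ, m < k →
      {φ : Fml PL | ValidOn (H k) φ} ≠ {φ : Fml PL | ValidOn (H m) φ} := by
    intro k m h heq
    have h1 : ValidOn (H m) (XBoxN m ZF) := (part1 m).1
    have h2 : ValidOn (H k) (XBoxN m ZF) := by
      rw [Set.ext_iff] at heq
      exact (heq (XBoxN m ZF)).mpr h1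
    have h3 : ValidOn (H (m + 1)) (XBoxN m ZF) := transfer_le (by omega) _ h2
    exact (part1 m).2 h3
  refine ⟨part1, fun k m h φ hv => transfer h φ hv, ?_⟩
  intro k m hkm
  rcases lt_or_gt_of_ne hkm with h | h
  · exact fun heq => main m k h heq.symm
  · exact main k m h

end FOML
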